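/- Let T ∈ ℝ, let a, b, σ be positive real constants, and let g₁, g₂ : (−∞,T] → ℝ be continuous with 0 ≤ g̲ ≤ g₁(t) ≤ g₂(t) ≤ ḡ for all t ≤ T, where g̲, ḡ are constants, and let 0 ≤ ψ̲ ≤ ψ₁ ≤ ψ₂ ≤ ψ̄ be constants. Let φ₁ and φ₂ be the solutions on (−∞,T] of the Riccati equation φ′(t) = (σ²/2)·φ(t)² + a·φ(t) − (1 + b·gᵢ(t)) with φᵢ(T) = ψᵢ (i = 1,2), and set φ̲(t) := Φ(t,T;ψ̲,g̲) and φ̄(t) := Φ(t,T;ψ̄,ḡ). Then for all t ≤ T: min(ψ̲, (k(g̲)−a)/σ²) ≤ φ̲(t) ≤ φ₁(t) ≤ φ₂(t) ≤ φ̄(t) ≤ max(ψ̄, (k(ḡ)−a)/σ²), where k(x) := √(a² + 2(1+b·x)·σ²). -/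

import Mathlib

/-- k(x) := √(a² + 2(1+b·x)·σ²). -/
noncomputable def kfun (a b σ x : ℝ) : ℝ := Real.sqrt (a ^ 2 + 2 * (1 + b * x) * σ ^ 2)

/-- The explicit solution Φ(t,T;ψ,γ) of the Riccati equation with constant coefficient γ. -/
noncomputable def Phi (a b σ ψ γ T t : ℝ) : ℝ :=
  ((kfun a b σ γ - a) / σ ^ 2 * (ψ + (a + kfun a b σ γ) / σ ^ 2) +
      (a + kfun a b σ γ) / σ ^ 2 * (ψ + (a - kfun a b σ γ) / σ ^ 2) *
        Real.exp (-(kfun a b σ γ) * (T - t))) /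
    ((ψ + (a + kfun a b σ γ) / σ ^ 2) +
      ((kfun a b σ γ - a) / σ ^ 2 - ψ) * Real.exp (-(kfun a b σ γ) * (T - t)))


/-!
The difference `d = g - f` of two solutions of `φ' = α φ² + β φ - p` and `φ' = α φ² + β φ - q`
satisfies the linear equation `d' = (α (f + g) + β) d - (q - p)` whose coefficient is bounded on
compact intervals. If `p ≤ q` and `d T ≥ 0`, the weighted difference `d · exp (K t)` cannot climb
from a negative value back to `0` forwards in time, so `d ≥ 0` on `(-∞, T]`. This orders
`Φ(·;ψ̲,g̲) ≤ φ₁ ≤ φ₂ ≤ Φ(·;ψ̄,ḡ)`. The explicit solution `Φ` is a Möbius function of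
`E = exp (-k (T - t)) ∈ (0, 1]` and is a convex combination of `ψ` and the equilibrium
`(k - a) / σ²`, which gives the two outer bounds.
-/

open Set

theorem nonneg_of_hasDerivAt_le_neg_mul_of_neg {d d' : ℝ → ℝ} {s T K : ℝ} (hs : s ≤ T)
    (hd : ContinuousOn d (Icc s T)) (hd' : ∀ x ∈ Ioo s T, HasDerivAt d (d' x) x)
    (hT : 0 ≤ d T) (hbound : ∀ x ∈ Ioo s T, d x < 0 → d' x ≤ -K * d x) : 0 ≤ d s := by
  by_contra! hds
  set Z := Icc s T ∩ d ⁻¹' Ici 0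
  have hZ_closed : IsClosed Z := hd.preimage_isClosed_of_isClosed isClosed_Icc isClosed_Ici
  have hZ_bdd : BddBelow Z := ⟨s, fun x hx => hx.1.1⟩
  have hτ : sInf Z ∈ Z := hZ_closed.csInf_mem ⟨T, ⟨hs, le_rfl⟩, hT⟩ hZ_bdd
  set τ := sInf Z
  have hsτ : s < τ := lt_of_le_of_ne hτ.1.1 fun h => (h ▸ hds).not_ge hτ.2
  have hneg : ∀ x ∈ Ioo s τ, d x < 0 := fun x hx => by
    by_contra! hx0
    exact hx.2.not_ge (csInf_le hZ_bdd ⟨⟨hx.1.le, hx.2.le.trans hτ.1.2⟩, hx0⟩)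
  -- `d x * exp (K x)` does not increase while `d < 0`, so it cannot climb from `d s < 0`
  -- to `d τ ≥ 0`.
  obtain ⟨ξ, hξ, hslope⟩ := exists_hasDerivAt_eq_slope (fun x => d x * Real.exp (K * x))
    (fun x => (d' x + K * d x) * Real.exp (K * x)) hsτ
    ((hd.mono (Icc_subset_Icc_right hτ.1.2)).mul (by fun_prop))
    fun x hx => by
      have hx' : x ∈ Ioo s T := ⟨hx.1, hx.2.trans_le hτ.1.2⟩
      have hexp : HasDerivAt (fun y => Real.exp (K * y)) (Real.exp (K * x) * K) x := by
        simpa using ((hasDerivAt_id x).const_mul K).exp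
      exact ((hd' x hx').mul hexp).congr_deriv (by ring)
  have hξ_nonpos : (d' ξ + K * d ξ) * Real.exp (K * ξ) ≤ 0 :=
    mul_nonpos_of_nonpos_of_nonneg
      (by linarith [hbound ξ ⟨hξ.1, hξ.2.trans_le hτ.1.2⟩ (hneg ξ hξ)]) (Real.exp_pos _).le
  rw [hslope, div_nonpos_iff] at hξ_nonpos
  have : d s * Real.exp (K * s) < 0 := mul_neg_of_neg_of_pos hds (Real.exp_pos _)
  have : 0 ≤ d τ * Real.exp (K * τ) := mul_nonneg hτ.2 (Real.exp_pos _).le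
  rcases hξ_nonpos with h | h <;> linarith [h.1, h.2]

theorem riccati_comparison {α β T : ℝ} {p q f g : ℝ → ℝ}
    (hf : ∀ t ≤ T, HasDerivWithinAt f (α * f t ^ 2 + β * f t - p t) (Iic T) t)
    (hg : ∀ t ≤ T, HasDerivWithinAt g (α * g t ^ 2 + β * g t - q t) (Iic T) t)
    (hpq : ∀ t ≤ T, p t ≤ q t) (hT : f T ≤ g T) : ∀ t ≤ T, f t ≤ g t := by
  intro s hs
  have hcont : ContinuousOn (fun x => α * (f x + g x) + β) (Icc s T) := by
    have hf' : ContinuousOn f (Iic T) := fun x hx => (hf x hx).continuousWithinAt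
    have hg' : ContinuousOn g (Iic T) := fun x hx => (hg x hx).continuousWithinAt
    exact ((hf'.add hg').const_smul α |>.add continuousOn_const).mono Icc_subset_Iic_self
  obtain ⟨K, hK⟩ := isCompact_Icc.exists_bound_of_continuousOn hcont
  suffices 0 ≤ g s - f s by linarith
  refine nonneg_of_hasDerivAt_le_neg_mul_of_neg (d := g - f) (K := K) hs
    (fun x hx => ((hg x hx.2).continuousWithinAt.sub (hf x hx.2).continuousWithinAt).mono
      Icc_subset_Iic_self)
    (fun x hx => ((hg x hx.2.le).hasDerivAt (Iic_mem_nhds hx.2)).sub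
      ((hf x hx.2.le).hasDerivAt (Iic_mem_nhds hx.2))) (sub_nonneg.2 hT) fun x hx hneg => ?_
  have hc : -K ≤ α * (f x + g x) + β := neg_le_of_abs_le <| by
    simpa using hK x (Ioo_subset_Icc_self hx)
  rw [Pi.sub_apply] at hneg ⊢
  nlinarith [hpq x hx.2.le]

section RiccatiSol

variable {p q ψ E : ℝ}

/-- Solution of `φ' = α (φ - p) (φ - q)` with `φ T = ψ`, as a Möbius function of
`E = exp (α (p - q) (t - T))`. -/
noncomputable def riccatiSol (p q ψ E : ℝ) : ℝ :=
  (p * (ψ - q) - q * (ψ - p) * E) / ((ψ - q) - (ψ - p) * E)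

theorem riccatiSol_one (hpq : p ≠ q) : riccatiSol p q ψ 1 = ψ := by
  rw [riccatiSol, div_eq_iff (by rwa [mul_one, sub_sub_sub_cancel_left, sub_ne_zero])]
  ring

theorem riccatiSol_denom_pos (hqp : q < p) (hqψ : q < ψ) (hE₀ : 0 < E) (hE₁ : E ≤ 1) :
    0 < (ψ - q) - (ψ - p) * E := by
  have : (ψ - q) - (ψ - p) * E = (ψ - q) * (1 - E) + (p - q) * E := by ring
  rw [this]
  exact add_pos_of_nonneg_of_pos (mul_nonneg (by linarith) (by linarith))
    (mul_pos (by linarith) hE₀)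

theorem riccatiSol_mem_Icc (hqp : q < p) (hqψ : q < ψ) (hE₀ : 0 < E) (hE₁ : E ≤ 1) :
    riccatiSol p q ψ E ∈ Icc (min ψ p) (max ψ p) := by
  have hD := riccatiSol_denom_pos hqp hqψ hE₀ hE₁
  -- a convex combination of `p` and `ψ`
  have hw : riccatiSol p q ψ E = p + (p - q) * E / ((ψ - q) - (ψ - p) * E) * (ψ - p) := by
    rw [riccatiSol]; field_simp; ring
  have hw₀ : 0 ≤ (p - q) * E / ((ψ - q) - (ψ - p) * E) := by
    have := mul_pos (sub_pos.2 hqp) hE₀; positivity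
  have hw₁ : (p - q) * E / ((ψ - q) - (ψ - p) * E) ≤ 1 := by
    rw [div_le_one hD]; nlinarith
  rw [hw]
  rcases le_total ψ p with h | h
  · rw [min_eq_left h, max_eq_right h]; constructor <;> nlinarith
  · rw [min_eq_right h, max_eq_left h]; constructor <;> nlinarith

theorem hasDerivAt_riccatiSol {α t : ℝ} {E : ℝ → ℝ} (hE : HasDerivAt E (α * (p - q) * E t) t)
    (hD : (ψ - q) - (ψ - p) * E t ≠ 0) :
    HasDerivAt (fun s => riccatiSol p q ψ (E s))
      (α * (riccatiSol p q ψ (E t) - p) * (riccatiSol p q ψ (E t) - q)) t := by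
  have hnum := (hE.const_mul (q * (ψ - p))).const_sub (p * (ψ - q))
  have hden := (hE.const_mul (ψ - p)).const_sub (ψ - q)
  refine (hnum.div hden hD).congr_deriv ?_
  simp only [riccatiSol]
  field_simp
  ring

end RiccatiSol

section Phi

variable {a b σ γ ψ T t : ℝ}

theorem kfun_sq (hc : 0 ≤ 1 + b * γ) : kfun a b σ γ ^ 2 = a ^ 2 + 2 * (1 + b * γ) * σ ^ 2 :=
  Real.sq_sqrt (by positivity)

theorem abs_lt_kfun (hσ : σ ≠ 0) (hc : 0 < 1 + b * γ) : |a| < kfun a b σ γ :=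
  Real.lt_sqrt (abs_nonneg a) |>.2 <| by
    rw [sq_abs, lt_add_iff_pos_right]; have : 0 < σ ^ 2 := by positivity
    positivity

-- `(k - a) / σ²` and `-(a + k) / σ²` are the roots of `σ²/2 x² + a x - (1 + b γ)`.
theorem Phi_eq_riccatiSol : Phi a b σ ψ γ T t =
    riccatiSol ((kfun a b σ γ - a) / σ ^ 2) (-(a + kfun a b σ γ) / σ ^ 2) ψ
      (Real.exp (-kfun a b σ γ * (T - t))) := by
  unfold Phi riccatiSol
  congr 1 <;> ring

theorem kfun_roots_lt (hσ : σ ≠ 0) (hc : 0 < 1 + b * γ) :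
    -(a + kfun a b σ γ) / σ ^ 2 < (kfun a b σ γ - a) / σ ^ 2 ∧
      -(a + kfun a b σ γ) / σ ^ 2 < 0 := by
  have hk := abs_lt_kfun (a := a) hσ hc
  have hσ2 : 0 < σ ^ 2 := by positivity
  constructor
  · gcongr; linarith [abs_nonneg a]
  · apply div_neg_of_neg_of_pos _ hσ2; linarith [neg_abs_le a]

theorem Phi_self (hσ : σ ≠ 0) (hc : 0 < 1 + b * γ) : Phi a b σ ψ γ T T = ψ := by
  rw [Phi_eq_riccatiSol, sub_self, mul_zero, Real.exp_zero]
  exact riccatiSol_one (kfun_roots_lt hσ hc).1.ne'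

theorem exp_neg_kfun_mul_mem_Ioc (hσ : σ ≠ 0) (hc : 0 < 1 + b * γ) (ht : t ≤ T) :
    Real.exp (-kfun a b σ γ * (T - t)) ∈ Ioc 0 1 := by
  have hk := (abs_nonneg a).trans_lt (abs_lt_kfun (a := a) hσ hc)
  exact ⟨Real.exp_pos _, Real.exp_le_one_iff.2 (by nlinarith)⟩

theorem Phi_mem_Icc (hσ : σ ≠ 0) (hc : 0 < 1 + b * γ) (hψ : 0 ≤ ψ) (ht : t ≤ T) :
    Phi a b σ ψ γ T t ∈
      Icc (min ψ ((kfun a b σ γ - a) / σ ^ 2)) (max ψ ((kfun a b σ γ - a) / σ ^ 2)) := by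
  obtain ⟨hqp, hq⟩ := kfun_roots_lt (a := a) hσ hc
  obtain ⟨hE₀, hE₁⟩ := exp_neg_kfun_mul_mem_Ioc (a := a) hσ hc ht
  rw [Phi_eq_riccatiSol]
  exact riccatiSol_mem_Icc hqp (hq.trans_le hψ) hE₀ hE₁

theorem hasDerivAt_Phi (hσ : σ ≠ 0) (hc : 0 < 1 + b * γ) (hψ : 0 ≤ ψ) (ht : t ≤ T) :
    HasDerivAt (Phi a b σ ψ γ T)
      (σ ^ 2 / 2 * Phi a b σ ψ γ T t ^ 2 + a * Phi a b σ ψ γ T t - (1 + b * γ)) t := by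
  obtain ⟨hqp, hq⟩ := kfun_roots_lt (a := a) hσ hc
  obtain ⟨hE₀, hE₁⟩ := exp_neg_kfun_mul_mem_Ioc (a := a) hσ hc ht
  have hlin : HasDerivAt (fun s => -kfun a b σ γ * (T - s)) (kfun a b σ γ) t := by
    simpa using ((hasDerivAt_id t).const_sub T).const_mul (-kfun a b σ γ)
  have hE := hlin.exp.congr_deriv (g' := σ ^ 2 / 2 *
      ((kfun a b σ γ - a) / σ ^ 2 - -(a + kfun a b σ γ) / σ ^ 2) *
        Real.exp (-kfun a b σ γ * (T - t))) (by field_simp; ring)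
  have h := hasDerivAt_riccatiSol (ψ := ψ) hE
    (riccatiSol_denom_pos hqp (hq.trans_le hψ) hE₀ hE₁).ne'
  simp only [← Phi_eq_riccatiSol] at h
  convert h using 1
  field_simp
  linear_combination (kfun_sq (a := a) (σ := σ) hc.le)

end Phi

theorem riccati_sandwich_general
    (T a b σ : ℝ) (hb : 0 < b) (hσ : 0 < σ)
    (glow ghigh : ℝ) (g₁ g₂ : ℝ → ℝ)
    (hglow : 0 ≤ glow)
    (hg_bounds : ∀ t ≤ T, glow ≤ g₁ t ∧ g₁ t ≤ g₂ t ∧ g₂ t ≤ ghigh)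
    (ψlow ψ₁ ψ₂ ψhigh : ℝ)
    (hψlow : 0 ≤ ψlow) (hψ₁ : ψlow ≤ ψ₁) (hψ₂ : ψ₁ ≤ ψ₂) (hψhigh : ψ₂ ≤ ψhigh)
    (φ₁ φ₂ : ℝ → ℝ)
    (hφ₁T : φ₁ T = ψ₁) (hφ₂T : φ₂ T = ψ₂)
    (hφ₁ : ∀ t ≤ T, HasDerivWithinAt φ₁
      (σ ^ 2 / 2 * (φ₁ t) ^ 2 + a * φ₁ t - (1 + b * g₁ t)) (Set.Iic T) t)
    (hφ₂ : ∀ t ≤ T, HasDerivWithinAt φ₂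
      (σ ^ 2 / 2 * (φ₂ t) ^ 2 + a * φ₂ t - (1 + b * g₂ t)) (Set.Iic T) t) :
    ∀ t ≤ T,
      min ψlow ((kfun a b σ glow - a) / σ ^ 2) ≤ Phi a b σ ψlow glow T t ∧
      Phi a b σ ψlow glow T t ≤ φ₁ t ∧
      φ₁ t ≤ φ₂ t ∧
      φ₂ t ≤ Phi a b σ ψhigh ghigh T t ∧
      Phi a b σ ψhigh ghigh T t ≤ max ψhigh ((kfun a b σ ghigh - a) / σ ^ 2) := by
  have hghigh : 0 ≤ ghigh := by linarith [hg_bounds T le_rfl]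
  have hclow : 0 < 1 + b * glow := by positivity
  have hchigh : 0 < 1 + b * ghigh := by positivity
  have hψhigh₀ : 0 ≤ ψhigh := by linarith
  have hcoef : ∀ {x y : ℝ}, x ≤ y → 1 + b * x ≤ 1 + b * y := fun h => by gcongr
  have hlow₁ := riccati_comparison (p := fun _ => 1 + b * glow) (q := fun s => 1 + b * g₁ s)
    (fun s hs => (hasDerivAt_Phi hσ.ne' hclow hψlow hs).hasDerivWithinAt) hφ₁
    (fun s hs => hcoef (hg_bounds s hs).1) (by rwa [Phi_self hσ.ne' hclow, hφ₁T])
  have h₁₂ := riccati_comparison (p := fun s => 1 + b * g₁ s) (q := fun s => 1 + b * g₂ s)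
    hφ₁ hφ₂ (fun s hs => hcoef (hg_bounds s hs).2.1) (by rwa [hφ₁T, hφ₂T])
  have h₂high := riccati_comparison (p := fun s => 1 + b * g₂ s) (q := fun _ => 1 + b * ghigh)
    hφ₂ (fun s hs => (hasDerivAt_Phi hσ.ne' hchigh hψhigh₀ hs).hasDerivWithinAt)
    (fun s hs => hcoef (hg_bounds s hs).2.2) (by rwa [Phi_self hσ.ne' hchigh, hφ₂T])
  intro t ht
  exact ⟨(Phi_mem_Icc hσ.ne' hclow hψlow ht).1, hlow₁ t ht, h₁₂ t ht, h₂high t ht,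
    (Phi_mem_Icc hσ.ne' hchigh hψhigh₀ ht).2⟩

/-- sandwich comparison for Riccati solutions: with
0 ≤ g̲ ≤ g₁(t) ≤ g₂(t) ≤ ḡ and 0 ≤ ψ̲ ≤ ψ₁ ≤ ψ₂ ≤ ψ̄, the solutions φ₁, φ₂ of the
corresponding Riccati equations and the extremal explicit solutions
φ̲ = Φ(·,T;ψ̲,g̲), φ̄ = Φ(·,T;ψ̄,ḡ) satisfy, for all t ≤ T,
min(ψ̲,(k(g̲)−a)/σ²) ≤ φ̲(t) ≤ φ₁(t) ≤ φ₂(t) ≤ φ̄(t) ≤ max(ψ̄,(k(ḡ)−a)/σ²). -/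
theorem riccati_sandwich
    (T a b σ : ℝ) (ha : 0 < a) (hb : 0 < b) (hσ : 0 < σ)
    (glow ghigh : ℝ) (g₁ g₂ : ℝ → ℝ)
    (hg₁_cont : ContinuousOn g₁ (Set.Iic T)) (hg₂_cont : ContinuousOn g₂ (Set.Iic T))
    (hglow : 0 ≤ glow)
    (hg_bounds : ∀ t ≤ T, glow ≤ g₁ t ∧ g₁ t ≤ g₂ t ∧ g₂ t ≤ ghigh)
    (ψlow ψ₁ ψ₂ ψhigh : ℝ)
    (hψlow : 0 ≤ ψlow) (hψ₁ : ψlow ≤ ψ₁) (hψ₂ : ψ₁ ≤ ψ₂) (hψhigh : ψ₂ ≤ ψhigh)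
    (φ₁ φ₂ : ℝ → ℝ)
    (hφ₁T : φ₁ T = ψ₁) (hφ₂T : φ₂ T = ψ₂)
    (hφ₁ : ∀ t ≤ T, HasDerivWithinAt φ₁
      (σ ^ 2 / 2 * (φ₁ t) ^ 2 + a * φ₁ t - (1 + b * g₁ t)) (Set.Iic T) t)
    (hφ₂ : ∀ t ≤ T, HasDerivWithinAt φ₂
      (σ ^ 2 / 2 * (φ₂ t) ^ 2 + a * φ₂ t - (1 + b * g₂ t)) (Set.Iic T) t) :
    ∀ t ≤ T,
      min ψlow ((kfun a b σ glow - a) / σ ^ 2) ≤ Phi a b σ ψlow glow T t ∧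
      Phi a b σ ψlow glow T t ≤ φ₁ t ∧
      φ₁ t ≤ φ₂ t ∧
      φ₂ t ≤ Phi a b σ ψhigh ghigh T t ∧
      Phi a b σ ψhigh ghigh T t ≤ max ψhigh ((kfun a b σ ghigh - a) / σ ^ 2) :=
  riccati_sandwich_general T a b σ hb hσ glow ghigh g₁ g₂ hglow hg_bounds ψlow ψ₁ ψ₂ ψhigh hψlow hψ₁
    hψ₂ hψhigh φ₁ φ₂ hφ₁T hφ₂T hφ₁ hφ₂
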